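/- For every positive integer n, the following identity holds in ℤ: 2·∑_{i=0}^{⌊n/2⌋} ∑_{j=0}^{⌊n/2⌋} ( C(n, i+j)² + C(n, h(i,j))² ) equals (n+2)·C(2n, n) if n is even, and n·C(2n, n) if n is odd, where in the arguments of C the indices i, j are cast to ℤ. -/
import Mathlib


/-- The extended binomial coefficient `C n m` for `n : ℕ` and `m : ℤ`: equal to
`n.choose m.toNat` when `0 ≤ m ≤ n`, and `0` otherwise. -/
def C (n : ℕ) (m : ℤ) : ℤ :=
  if 0 ≤ m ∧ m ≤ (n : ℤ) then (n.choose m.toNat : ℤ) else 0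

/-- `h i j = i - j - 1` if `j ≤ i`, and `j - i - 1` if `i < j`. -/
def h (i j : ℤ) : ℤ := if j ≤ i then i - j - 1 else j - i - 1

open Finset

lemma C_natCast (n k : ℕ) : C n (k : ℤ) = (n.choose k : ℤ) := by
  unfold C
  split
  · simp
  · rename_i hk
    push_neg at hk
    have hnk : n < k := by
      have := hk (by positivity)
      exact_mod_cast this
    rw [Nat.choose_eq_zero_of_lt hnk]
    simp

/-- squared binomial coefficients -/
def fsq (n k : ℕ) : ℤ := ((n.choose k : ℤ)) ^ 2

/-- partial sums of squared binomial coefficients -/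
def G (n t : ℕ) : ℤ := ∑ k ∈ range t, fsq n k

lemma h_sq_decomp (n i j : ℕ) :
    C n (h (i : ℤ) (j : ℤ)) ^ 2 =
      (if j < i then fsq n (i - j - 1) else 0) +
      (if i < j then fsq n (j - i - 1) else 0) := by
  rcases lt_trichotomy i j with hij | hij | hij
  · have hh : h (i : ℤ) (j : ℤ) = ((j - i - 1 : ℕ) : ℤ) := by
      unfold h
      rw [if_neg (by exact_mod_cast not_le.mpr hij)]
      push_cast [Nat.sub_sub]
      omega
    rw [hh, C_natCast, if_neg (by omega), if_pos hij]
    simp [fsq]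
  · subst hij
    have hh : h (i : ℤ) (i : ℤ) = -1 := by unfold h; simp
    rw [hh]
    have : C n (-1) = 0 := by unfold C; norm_num
    rw [this]
    simp
  · have hh : h (i : ℤ) (j : ℤ) = ((i - j - 1 : ℕ) : ℤ) := by
      unfold h
      rw [if_pos (by exact_mod_cast hij.le)]
      push_cast [Nat.sub_sub]
      omega
    rw [hh, C_natCast, if_pos hij, if_neg (by omega)]
    simp [fsq]

lemma sum_h_inner (n N : ℕ) (i : ℕ) (hi : i < N) :
    ∑ j ∈ range N, (if j < i then fsq n (i - j - 1) else 0) = G n i := by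
  rw [← Finset.sum_filter]
  have : (range N).filter (fun j => j < i) = range i := by
    ext x; simp; omega
  rw [this]
  have := Finset.sum_range_reflect (fun k => fsq n k) i
  unfold G
  rw [← this]
  apply Finset.sum_congr rfl
  intro x hx
  simp at hx
  congr 1
  omega

lemma sum_add_inner (n N i : ℕ) :
    ∑ j ∈ range N, fsq n (i + j) = G n (i + N) - G n i := by
  unfold G
  rw [Finset.sum_range_add]
  ring

lemma sum_partial (g : ℕ → ℤ) (T : ℕ) :
    ∑ t ∈ range T, ∑ k ∈ range t, g k = ∑ k ∈ range T, ((T : ℤ) - 1 - k) * g k := by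
  induction T with
  | zero => simp
  | succ T ih =>
    rw [Finset.sum_range_succ, ih, Finset.sum_range_succ]
    push_cast
    rw [show ((T : ℤ) + 1 - 1 - T) * g T = 0 by ring, add_zero]
    rw [← Finset.sum_add_distrib]
    apply Finset.sum_congr rfl
    intro x _
    ring

lemma reflect_sum (n : ℕ) (c : ℤ) :
    2 * ∑ k ∈ range (n + 1), (c - k) * fsq n k = (2 * c - n) * G n (n + 1) := by
  have h1 : ∑ k ∈ range (n + 1), (c - k) * fsq n k
      = ∑ k ∈ range (n + 1), (c - (n - k : ℤ)) * fsq n k := by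
    rw [← Finset.sum_range_reflect (fun k => (c - k) * fsq n k) (n + 1)]
    apply Finset.sum_congr rfl
    intro x hx
    simp only [Finset.mem_range] at hx
    have hx' : x ≤ n := by omega
    have hcast : ((n + 1 - 1 - x : ℕ) : ℤ) = (n : ℤ) - x := by
      push_cast [Nat.sub_sub]
      omega
    rw [hcast]
    congr 1
    unfold fsq
    rw [show n + 1 - 1 - x = n - x from by omega, Nat.choose_symm hx']
  unfold G
  rw [two_mul, Finset.mul_sum]
  nth_rewrite 2 [h1]
  rw [← Finset.sum_add_distrib]
  apply Finset.sum_congr rfl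
  intro x _
  ring

lemma G_central (n : ℕ) : G n (n + 1) = ((2 * n).choose n : ℤ) := by
  have := Nat.add_choose_eq n n n
  rw [Finset.Nat.sum_antidiagonal_eq_sum_range_succ (fun a b => n.choose a * n.choose b)] at this
  unfold G fsq
  rw [two_mul, this]
  push_cast
  apply Finset.sum_congr rfl
  intro x hx
  simp only [Finset.mem_range] at hx
  rw [Nat.choose_symm (by omega)]
  ring

/-- Twice the double sum of `C n (i+j)² + C n (h i j)²` over `0 ≤ i, j ≤ ⌊n/2⌋`
equals `(n+2) * C (2n) n` for `n` even and `n * C (2n) n` for `n` odd. -/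
theorem sum_squares_identity (n : ℕ) (hn : 1 ≤ n) :
    2 * ∑ i ∈ Finset.range (n / 2 + 1), ∑ j ∈ Finset.range (n / 2 + 1),
        (C n ((i : ℤ) + j) ^ 2 + C n (h i j) ^ 2) =
      if Even n then ((n : ℤ) + 2) * C (2 * n) n else (n : ℤ) * C (2 * n) n := by
  set N := n / 2 + 1 with hN
  -- Rewrite the double sum as ∑_{t < 2N} G n t
  have key : ∑ i ∈ Finset.range N, ∑ j ∈ Finset.range N,
      (C n ((i : ℤ) + j) ^ 2 + C n (h i j) ^ 2) = ∑ t ∈ range (N + N), G n t := by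
    have step1 : ∀ i ∈ range N, ∑ j ∈ range N, (C n ((i : ℤ) + j) ^ 2 + C n (h i j) ^ 2)
        = (G n (i + N) - G n i) + (G n i + ∑ j ∈ range N, (if i < j then fsq n (j - i - 1) else 0)) := by
      intro i hi
      simp only [Finset.mem_range] at hi
      rw [Finset.sum_add_distrib]
      congr 1
      · rw [← sum_add_inner n N i]
        apply Finset.sum_congr rfl
        intro j _
        have : (i : ℤ) + j = ((i + j : ℕ) : ℤ) := by push_cast; ring
        rw [this, C_natCast]
        rfl
      · rw [← sum_h_inner n N i hi, ← Finset.sum_add_distrib]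
        apply Finset.sum_congr rfl
        intro j _
        exact h_sq_decomp n i j
    rw [Finset.sum_congr rfl step1]
    have swap : ∑ i ∈ range N, ∑ j ∈ range N, (if i < j then fsq n (j - i - 1) else 0)
        = ∑ i ∈ range N, G n i := by
      rw [Finset.sum_comm]
      apply Finset.sum_congr rfl
      intro j hj
      simp only [Finset.mem_range] at hj
      exact sum_h_inner n N j hj
    have hadd : ∑ t ∈ range (N + N), G n t
        = ∑ i ∈ range N, G n i + ∑ i ∈ range N, G n (N + i) :=
      Finset.sum_range_add (G n) N N
    simp only [Finset.sum_add_distrib, Finset.sum_sub_distrib]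
    rw [swap, hadd]
    have : ∀ i ∈ range N, G n (N + i) = G n (i + N) := by
      intro i _; rw [Nat.add_comm]
    rw [Finset.sum_congr rfl this]
    ring
  rw [key]
  simp only [G]
  rw [sum_partial (fsq n)]
  have hCn : C (2 * n) n = ((2 * n).choose n : ℤ) := by
    rw [show ((n : ℤ)) = ((n : ℕ) : ℤ) from rfl, C_natCast]
  rcases Nat.even_or_odd n with he | ho
  · rw [if_pos he]
    obtain ⟨m, hm⟩ := he
    have hNN : N + N = n + 2 := by omega
    rw [hNN]
    push_cast
    have trunc : ∑ k ∈ range (n + 2), ((n : ℤ) + 2 - 1 - k) * fsq n k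
        = ∑ k ∈ range (n + 1), ((n : ℤ) + 1 - k) * fsq n k := by
      rw [Finset.sum_range_succ]
      have : fsq n (n + 1) = 0 := by
        unfold fsq
        rw [Nat.choose_eq_zero_of_lt (by omega)]
        simp
      rw [this]
      push_cast
      rw [mul_zero, add_zero]
      apply Finset.sum_congr rfl
      intro x _; ring
    rw [trunc]
    have := reflect_sum n ((n : ℤ) + 1)
    have h2 : ∀ k ∈ range (n+1), ((n : ℤ) + 1 - k) * fsq n k = (((n:ℤ)+1) - k) * fsq n k := by
      intro k _; ring
    rw [Finset.sum_congr rfl h2, this, G_central, hCn]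
    ring
  · rw [if_neg (Nat.not_even_iff_odd.symm.mp ho)]
    obtain ⟨m, hm⟩ := ho
    have hNN : N + N = n + 1 := by omega
    rw [hNN]
    push_cast
    have h2 : ∀ k ∈ range (n+1), ((n : ℤ) + 1 - 1 - k) * fsq n k = ((n:ℤ) - k) * fsq n k := by
      intro k _; ring
    rw [Finset.sum_congr rfl h2, reflect_sum n (n : ℤ), G_central, hCn]
    ring
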